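/- If 𝔱 = 𝔠, then there is an idempotent p ∈ ℕ* (necessarily a minimal idempotent) that is ≤-incomparable with every other idempotent: for every idempotent q ≠ p, neither p ≤ q nor q ≤ p, where r ≤ s means r + s = s + r = r. -/

import Mathlib

open Filter Set Topology

noncomputable section

/-- `βℕ`: the space of ultrafilters on `ℕ` (the Stone–Čech compactification of `ℕ`). -/
abbrev βN := Ultrafilter ℕ

/-- `ℕ* = βℕ ∖ ℕ`: the free (nonprincipal) ultrafilters, i.e. those containing
every cofinite set. -/
def NStar : Set βN := {p | (p : Filter ℕ) ≤ Filter.cofinite}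

/-- The shift map `σ : βℕ → βℕ`, the pushforward under `n ↦ n + 1`. -/
def shift (p : βN) : βN := p.map (· + 1)

/-- Addition on `βℕ`: `A ∈ p + q ↔ {n | A − n ∈ p} ∈ q`, where `A − n = {m | m + n ∈ A}`. -/
def addU (p q : βN) : βN := q.bind fun n => p.map (· + n)

/-- A right ideal of `(βℕ, +)`: `I + βℕ ⊆ I`. -/
def IsRightIdeal (I : Set βN) : Prop := ∀ p ∈ I, ∀ q : βN, addU p q ∈ I

/-- A minimal right ideal: a nonempty right ideal not properly containing any
other (nonempty) right ideal. -/
def IsMinRightIdeal (I : Set βN) : Prop :=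
  I.Nonempty ∧ IsRightIdeal I ∧
    ∀ J : Set βN, J.Nonempty → IsRightIdeal J → J ⊆ I → J = I

/-- `A* = {p ∈ ℕ* | A ∈ p}`, as a subset of the subspace `ℕ*`. -/
def starSet (A : Set ℕ) : Set ↥NStar := {p | A ∈ (p : βN)}

/-- `F* = ⋂_{A ∈ F} A*` for a (free) filter `F` on `ℕ`. -/
def filterStar (F : Filter ℕ) : Set βN := ⋂ A ∈ F, {p : βN | A ∈ p}

/-- A closed `P`-set of the space `ℕ*`: for every countable collection of open
sets containing `X`, `X` is contained in the interior of the intersection. -/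
def IsPSetSub (X : Set ↥NStar) : Prop :=
  IsClosed X ∧ ∀ 𝒜 : Set (Set ↥NStar), 𝒜.Countable →
    (∀ U ∈ 𝒜, IsOpen U ∧ X ⊆ U) → X ⊆ interior (⋂₀ 𝒜)

/-- A subset of `βℕ` which lies in `ℕ*` and is a closed `P`-set of `ℕ*`. -/
def IsPSetIn (X : Set βN) : Prop :=
  X ⊆ NStar ∧ IsPSetSub (Subtype.val ⁻¹' X)

/-- `A ⊆ ℕ` is thick if it contains arbitrarily long intervals. -/
def Thick (A : Set ℕ) : Prop := ∀ k : ℕ, ∃ n : ℕ, Set.Icc n (n + k) ⊆ A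

/-- `A ⊆* B`: `A ∖ B` is finite. -/
def almostSub (A B : Set ℕ) : Prop := (A \ B).Finite

/-- The tower number `𝔱`: the least cardinality of a `⊆*`-chain of infinite subsets
of `ℕ` with no infinite pseudo-intersection. -/
def towerNum : Cardinal :=
  sInf {c : Cardinal | ∃ C : Set (Set ℕ), c = Cardinal.mk ↥C ∧ (∀ A ∈ C, A.Infinite) ∧
    IsChain almostSub C ∧ ¬∃ B : Set ℕ, B.Infinite ∧ ∀ A ∈ C, almostSub B A}

/-- `𝔱_Θ`: the least cardinality of a `⊆*`-chain of thick subsets of `ℕ` with no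
thick `⊆*`-lower bound. -/
def towerNumTheta : Cardinal :=
  sInf {c : Cardinal | ∃ C : Set (Set ℕ), c = Cardinal.mk ↥C ∧ (∀ A ∈ C, Thick A) ∧
    IsChain almostSub C ∧ ¬∃ B : Set ℕ, Thick B ∧ ∀ A ∈ C, almostSub B A}

/-- The pseudo-intersection number `𝔭`: the least cardinality of a filter base of
infinite subsets of `ℕ` (all finite intersections infinite) with no infinite
pseudo-intersection. -/
def pNum : Cardinal :=
  sInf {c : Cardinal | ∃ C : Set (Set ℕ), c = Cardinal.mk ↥C ∧
    (∀ S : Finset (Set ℕ), ↑S ⊆ C → (⋂ A ∈ S, A : Set ℕ).Infinite) ∧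
    ¬∃ B : Set ℕ, B.Infinite ∧ ∀ A ∈ C, almostSub B A}

/-- Chain transitivity for a dynamical system on a topological space, via open
covers: for every open cover `𝒰` and all `x, y` there is a `𝒰`-chain from `x` to `y`. -/
def ChainTransitive {X : Type*} [TopologicalSpace X] (f : X → X) : Prop :=
  ∀ 𝒰 : Set (Set X), (∀ U ∈ 𝒰, IsOpen U) → ⋃₀ 𝒰 = Set.univ →
    ∀ x y : X, ∃ (n : ℕ) (c : ℕ → X), c 0 = x ∧ c n = y ∧
      ∀ i < n, ∃ U ∈ 𝒰, f (c i) ∈ U ∧ c (i + 1) ∈ U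

lemma shift_mem_NStar {p : βN} (hp : p ∈ NStar) : shift p ∈ NStar := by
  have h1 : Filter.Tendsto (· + 1) Filter.cofinite Filter.cofinite :=
    Function.Injective.tendsto_cofinite (add_left_injective 1)
  simp only [NStar, Set.mem_setOf_eq, shift, Ultrafilter.coe_map] at *
  exact (Filter.map_mono hp).trans h1

/-- The shift map restricted to `ℕ*`. -/
def shiftStar (p : ↥NStar) : ↥NStar := ⟨shift p.1, shift_mem_NStar p.2⟩

/-!
Under `𝔱 = 𝔠`, every `⊆*`-chain of fewer than `𝔠` thick sets has a thick pseudo-intersection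
(this uses `𝔱 ≤ 𝔟`: pick, for each `k`, a start of a length-`k` interval beyond a dominating
function). A recursion of length `𝔠` therefore builds a `⊆*`-decreasing tower `(T i)` of thick
sets with `T i ⊆* T j - 1` for `j < i`, in which every `A ⊆ ℕ` is decided by some `T i`: either
`T i ∩ A = ∅` or `T i ⊆ (A - 0) ∪ ⋯ ∪ (A - k)`.

The free ultrafilters containing every `T i` form a closed set `R` which is a right ideal
(the tower is translation invariant) and minimal (deciding every `A` puts each `q ∈ R` in
`p + βℕ` for every `p ∈ R`). So `R` contains an idempotent `p`, and every idempotent of `R` is a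
left identity of `R`. If `q ≤ p` then `q = p + q ∈ R`. If `p ≤ q` then `q + p = p ∈ R`, and some
`q + n`, hence `q = q + q` itself, lies in `R`: otherwise countably many indices would witness
`q + n ∉ R`, and as `cf 𝔠 > ω` a single `T b` below all of them would lie in no `q + n`.
Either way `q ∈ R`, and the two left identities `p` and `q` of `R` coincide.
-/

open Cardinal

attribute [local instance] Ultrafilter.addSemigroup

lemma mem_addU {A : Set ℕ} {p q : βN} : A ∈ addU p q ↔ {n | (· + n) ⁻¹' A ∈ p} ∈ q :=
  Iff.rfl

lemma addU_eq_add (p q : βN) : addU p q = q + p := by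
  ext A
  change {n | (· + n) ⁻¹' A ∈ p} ∈ q ↔ {m | {m' | m + m' ∈ A} ∈ p} ∈ q
  simp only [Set.preimage, add_comm]

lemma addU_assoc (p q r : βN) : addU (addU p q) r = addU p (addU q r) := by
  simp only [addU_eq_add, add_assoc]

lemma addU_pure (p : βN) (n : ℕ) : addU p (pure n) = p.map (· + n) := by
  ext A
  rfl

lemma mem_filterStar {F : Filter ℕ} {p : βN} : p ∈ filterStar F ↔ ↑p ≤ F := by
  simp [filterStar, Filter.le_def]

lemma mem_NStar_iff_mem_filterStar {p : βN} : p ∈ NStar ↔ p ∈ filterStar cofinite :=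
  mem_filterStar.symm

lemma isClosed_filterStar (F : Filter ℕ) : IsClosed (filterStar F) :=
  isClosed_biInter fun A _ => ultrafilter_isClosed_basic A

lemma tendsto_add_cofinite (n : ℕ) : Tendsto (· + n) cofinite cofinite :=
  (add_left_injective n).tendsto_cofinite

lemma isRightIdeal_filterStar {F : Filter ℕ} (hF : ∀ n, Tendsto (· + n) F F) :
    IsRightIdeal (filterStar F) := by
  intro p hp x
  rw [mem_filterStar] at hp ⊢
  intro A hA
  rw [Ultrafilter.mem_coe, mem_addU]
  exact Filter.mem_of_superset Filter.univ_mem fun n _ => hp (hF n hA)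

lemma addU_mem_NStar {p : βN} (hp : p ∈ NStar) (x : βN) : addU p x ∈ NStar := by
  rw [mem_NStar_iff_mem_filterStar] at *
  exact isRightIdeal_filterStar tendsto_add_cofinite p hp x

lemma IsRightIdeal.exists_idempotent {R : Set βN} (hR : IsRightIdeal R) (hc : IsClosed R)
    (hne : R.Nonempty) : ∃ p ∈ R, addU p p = p := by
  obtain ⟨p, hp, hpp⟩ := exists_idempotent_in_compact_add_subsemigroup
    Ultrafilter.continuous_add_left R hne hc.isCompact fun x _ y hy => by
      rw [← addU_eq_add]; exact hR y hy x
  exact ⟨p, hp, by rw [addU_eq_add, hpp]⟩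

lemma mem_filterStar_of_addU_pure_mem {F : Filter ℕ} (hF : ∀ n, Tendsto (· + n) F F)
    {q : βN} (hq : q ∈ NStar) (hqq : addU q q = q) {n : ℕ}
    (hn : addU q (pure n) ∈ filterStar F) : q ∈ filterStar F := by
  rw [addU_pure, mem_filterStar] at hn
  have htail : ∀ m ≥ n, Tendsto (· + m) q F := fun m hm => by
    have := (hF (m - n)).comp hn
    rwa [Function.comp_def, show (fun x => x + n + (m - n)) = (· + m) by
      funext x; omega] at this
  rw [mem_filterStar]
  intro A hA
  rw [Ultrafilter.mem_coe, ← hqq, mem_addU]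
  exact Filter.mem_of_superset (hq (Nat.cofinite_eq_atTop ▸ Filter.eventually_ge_atTop n))
    fun m hm => htail m hm hA

lemma exists_addU_eq_of_forall_mem {p q : βN} (h : ∀ A ∈ q, ∃ n, (· + n) ⁻¹' A ∈ p) :
    ∃ x, addU p x = q := by
  have hclosed : IsClosed (Set.range (addU p)) := by
    rw [show addU p = (· + p) from funext (addU_eq_add p)]
    exact (isCompact_range (Ultrafilter.continuous_add_left p)).isClosed
  refine closure_minimal (Set.range_subset_iff.2 fun n => ⟨pure n, rfl⟩ : _ ⊆ Set.range (addU p))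
    hclosed ?_
  rw [ultrafilterBasis_is_basis.mem_closure_iff]
  rintro _ ⟨A, rfl⟩ hA
  obtain ⟨n, hn⟩ := h A hA
  exact ⟨addU p (pure n), hn, n, rfl⟩

lemma almostSub_iff_mem_cofinite_inf_principal {A B : Set ℕ} :
    almostSub A B ↔ B ∈ cofinite ⊓ 𝓟 A := by
  rw [Filter.mem_inf_principal, Filter.mem_cofinite]
  simp only [Set.compl_ofPred, Classical.not_imp]
  rfl

lemma almostSub_of_subset {A B : Set ℕ} (h : A ⊆ B) : almostSub A B := by
  simp [almostSub, Set.sdiff_eq_empty.2 h]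

lemma almostSub_trans {A B C : Set ℕ} (hAB : almostSub A B) (hBC : almostSub B C) :
    almostSub A C :=
  (hAB.union hBC).subset fun x hx => by by_cases hB : x ∈ B <;> simp_all

lemma almostSub.preimage_add {A B : Set ℕ} (h : almostSub A B) (n : ℕ) :
    almostSub ((· + n) ⁻¹' A) ((· + n) ⁻¹' B) := by
  unfold almostSub
  rw [← Set.preimage_sdiff]
  exact h.preimage (add_left_injective n).injOn

lemma mem_of_almostSub {p : βN} (hp : p ∈ NStar) {A B : Set ℕ} (hA : A ∈ p)
    (h : almostSub A B) : B ∈ p :=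
  (le_inf hp (Filter.le_principal_iff.2 hA) : (p : Filter ℕ) ≤ cofinite ⊓ 𝓟 A)
    (almostSub_iff_mem_cofinite_inf_principal.1 h)

lemma Thick.infinite {A : Set ℕ} (hA : Thick A) : A.Infinite := by
  refine Set.infinite_of_forall_exists_gt fun a => ?_
  obtain ⟨n, hn⟩ := hA (a + 1)
  exact ⟨n + (a + 1), hn ⟨by omega, le_rfl⟩, by omega⟩

lemma Thick.inter_preimage_add_one {A : Set ℕ} (hA : Thick A) :
    Thick (A ∩ (· + 1) ⁻¹' A) := by
  intro k
  obtain ⟨n, hn⟩ := hA (k + 1)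
  exact ⟨n, fun m ⟨hm₁, hm₂⟩ => ⟨hn ⟨hm₁, by omega⟩, show m + 1 ∈ A from hn ⟨by omega, by omega⟩⟩⟩

def intervalStarts (k : ℕ) (A : Set ℕ) : Set ℕ := {n | Set.Icc n (n + k) ⊆ A}

lemma Thick.infinite_intervalStarts {A : Set ℕ} (hA : Thick A) (k : ℕ) :
    (intervalStarts k A).Infinite := by
  refine Set.infinite_of_forall_exists_gt fun a => ?_
  obtain ⟨n, hn⟩ := hA (a + 1 + k)
  exact ⟨n + a + 1, fun m ⟨hm₁, hm₂⟩ => hn ⟨by omega, by omega⟩, by omega⟩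

lemma almostSub.intervalStarts {A B : Set ℕ} (h : almostSub A B) (k : ℕ) :
    almostSub (intervalStarts k A) (intervalStarts k B) := by
  refine (h.biUnion fun m _ => Set.finite_Iic m).subset fun n ⟨hnA, hnB⟩ => ?_
  obtain ⟨m, hm, hmB⟩ := Set.not_subset.1 hnB
  exact Set.mem_biUnion ⟨hnA hm, hmB⟩ hm.1

/-- `T` decides `A`: an ultrafilter containing `T` either omits `A` or contains some
`A - n = (· + n) ⁻¹' A`. -/
def Decides (T A : Set ℕ) : Prop :=
  Disjoint T A ∨ ∃ k, T ⊆ ⋃ n ∈ Set.Iic k, (· + n) ⁻¹' A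

lemma Thick.exists_subset_decides {B : Set ℕ} (hB : Thick B) (A : Set ℕ) :
    ∃ T ⊆ B, Thick T ∧ Decides T A := by
  by_cases hBA : Thick (B \ A)
  · exact ⟨B \ A, Set.sdiff_subset, hBA, Or.inl Set.disjoint_sdiff_left⟩
  obtain ⟨k, hk⟩ : ∃ k, ∀ n, ¬Set.Icc n (n + k) ⊆ B \ A := by
    simpa [Thick] using hBA
  refine ⟨B ∩ ⋃ n ∈ Set.Iic k, (· + n) ⁻¹' A, Set.inter_subset_left, fun K => ?_,
    Or.inr ⟨k, Set.inter_subset_right⟩⟩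
  obtain ⟨n, hn⟩ := hB (K + k)
  refine ⟨n, fun m ⟨hm₁, hm₂⟩ => ⟨hn ⟨hm₁, by omega⟩, ?_⟩⟩
  obtain ⟨t, ⟨ht₁, ht₂⟩, htBA⟩ := Set.not_subset.1 (hk m)
  have htA : t ∈ A := by
    by_contra h
    exact htBA ⟨hn ⟨by omega, by omega⟩, h⟩
  exact Set.mem_biUnion (x := t - m) (by simp only [Set.mem_Iic]; omega)
    (by rwa [Set.mem_preimage, Nat.add_sub_cancel' ht₁])

lemma exists_infinite_almostSub_of_mk_lt_towerNum {ι : Type} [LinearOrder ι] (f : ι → Set ℕ)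
    (hι : #ι < towerNum) (hinf : ∀ i, (f i).Infinite)
    (hanti : ∀ ⦃i j⦄, j < i → almostSub (f i) (f j)) :
    ∃ B : Set ℕ, B.Infinite ∧ ∀ i, almostSub B (f i) := by
  by_contra hB
  have hchain : IsChain almostSub (Set.range f) := by
    rintro _ ⟨i, rfl⟩ _ ⟨j, rfl⟩ hne
    rcases lt_or_gt_of_ne (ne_of_apply_ne f hne) with hij | hji
    · exact Or.inr (hanti hij)
    · exact Or.inl (hanti hji)
  have : towerNum ≤ #(Set.range f) :=
    csInf_le' ⟨_, rfl, Set.forall_mem_range.2 hinf, hchain, by simpa using hB⟩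
  exact (this.trans_lt (mk_range_le.trans_lt hι)).false

lemma Set.Infinite.exists_sparse_subset {B : Set ℕ} (hB : B.Infinite) (h : ℕ → ℕ) :
    ∃ Y ⊆ B, Y.Infinite ∧ ∀ a ∈ Y, ∀ b ∈ Y, a < b → h a < b := by
  choose next hnextB hnext using fun a => hB.exists_gt (max a (h a))
  set y : ℕ → ℕ := fun n => next^[n + 1] 0
  have hy : ∀ n, y (n + 1) = next (y n) := fun n => Function.iterate_succ_apply' next (n + 1) 0
  have hmono : StrictMono y := strictMono_nat_of_lt_succ fun n =>
    (hy n).symm ▸ (le_max_left _ _).trans_lt (hnext (y n))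
  refine ⟨Set.range y, ?_, Set.infinite_range_of_injective hmono.injective, ?_⟩
  · rintro _ ⟨n, rfl⟩
    change next^[n + 1] 0 ∈ B
    rw [Function.iterate_succ_apply']
    exact hnextB _
  · rintro _ ⟨m, rfl⟩ _ ⟨n, rfl⟩ hmn
    calc h (y m) < y (m + 1) := (hy m).symm ▸ (le_max_right _ _).trans_lt (hnext (y m))
      _ ≤ y n := hmono.monotone (hmono.lt_iff_lt.1 hmn)

theorem exists_transfinite_seq {σ β : Type*} [LinearOrder σ] [WellFoundedLT σ] [Nonempty β]
    (P : σ → β → Prop) (R : β → β → Prop)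
    (step : ∀ i (f : σ → β), (∀ j < i, P j (f j) ∧ ∀ k < j, R (f j) (f k)) →
      ∃ y, P i y ∧ ∀ j < i, R y (f j)) :
    ∃ f : σ → β, ∀ i, P i (f i) ∧ ∀ j < i, R (f i) (f j) := by
  classical
  let Good (i : σ) (prev : ∀ j, j < i → β) (y : β) : Prop :=
    P i y ∧ ∀ j (hj : j < i), R y (prev j hj)
  let f : σ → β := wellFounded_lt.fix fun i prev =>
    if h : ∃ y, Good i prev y then h.choose else Classical.arbitrary β
  refine ⟨f, fun i => wellFounded_lt.induction (C := fun i => P i (f i) ∧ ∀ j < i, R (f i) (f j))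
    i fun i IH => ?_⟩
  have h : ∃ y, Good i (fun j _ => f j) y := step i f IH
  rw [show f i = _ from wellFounded_lt.fix_eq _ i, dif_pos h]
  exact h.choose_spec

theorem exists_eventually_le_of_mk_lt_towerNum {ι : Type} (f : ι → ℕ → ℕ)
    (hι : #ι < towerNum) : ∃ g : ℕ → ℕ, ∀ i, ∀ᶠ k in atTop, f i k ≤ g k := by
  obtain ⟨e⟩ : Nonempty ((#ι).ord.ToType ≃ ι) := Cardinal.eq.1 (by simp)
  let bound (i : (#ι).ord.ToType) (a : ℕ) : ℕ := (Finset.Iic a).sup (f (e i))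
  obtain ⟨X, hX⟩ := exists_transfinite_seq
    (fun i Y => Y.Infinite ∧ ∀ a ∈ Y, ∀ b ∈ Y, a < b → bound i a < b) almostSub
    fun i X hX => by
      obtain ⟨B, hB, hBX⟩ := exists_infinite_almostSub_of_mk_lt_towerNum
        (fun j : Set.Iio i => X j) ((show #(Set.Iio i) < #ι by simpa using mk_Iio_lt i).trans hι)
        (fun j => (hX j j.2).1.1) (fun j k hkj => (hX j j.2).2 k hkj)
      obtain ⟨Y, hYB, hY, hsparse⟩ := hB.exists_sparse_subset (bound i)
      exact ⟨Y, ⟨hY, hsparse⟩, fun j hj => almostSub_trans (almostSub_of_subset hYB) (hBX ⟨j, hj⟩)⟩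
  obtain ⟨Z, hZ, hZX⟩ := exists_infinite_almostSub_of_mk_lt_towerNum X (by simpa using hι)
    (fun i => (hX i).1.1) (fun i j hji => (hX i).2 j hji)
  -- for large `k`, both `next k` and `next (next k)` lie in the `bound`-sparse set `X (e.symm i)`
  choose next hnextZ hnext using fun k => hZ.exists_gt k
  refine ⟨fun k => next (next k), fun i => ?_⟩
  obtain ⟨N, hN⟩ := (hZX (e.symm i)).bddAbove
  have hmem : ∀ m, N < m → m ∈ Z → m ∈ X (e.symm i) := fun m hNm hmZ => by
    by_contra h
    exact (hN ⟨hmZ, h⟩).not_gt hNm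
  filter_upwards [eventually_ge_atTop N] with k hk
  refine le_of_lt ?_
  calc f i k ≤ bound (e.symm i) (next k) := by
        simpa [bound] using Finset.le_sup (f := f i) (Finset.mem_Iic.2 (hnext k).le)
    _ < next (next k) := (hX _).1.2 _ (hmem _ (hk.trans_lt (hnext k)) (hnextZ k)) _
        (hmem _ ((hk.trans_lt (hnext k)).trans (hnext _)) (hnextZ _)) (hnext _)

theorem exists_thick_almostSub_of_mk_lt_towerNum {ι : Type} [LinearOrder ι] (f : ι → Set ℕ)
    (hι : #ι < towerNum) (hthick : ∀ i, Thick (f i))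
    (hanti : ∀ ⦃i j⦄, j < i → almostSub (f i) (f j)) :
    ∃ B : Set ℕ, Thick B ∧ ∀ i, almostSub B (f i) := by
  choose S hS hSf using fun k => exists_infinite_almostSub_of_mk_lt_towerNum
    (fun i => intervalStarts k (f i)) hι (fun i => (hthick i).infinite_intervalStarts k)
    fun i j hji => (hanti hji).intervalStarts k
  obtain ⟨g, hg⟩ := exists_eventually_le_of_mk_lt_towerNum
    (fun i k => sSup (S k \ intervalStarts k (f i))) hι
  choose n hnS hn using fun k => (hS k).exists_gt (g k)
  refine ⟨⋃ k, Set.Icc (n k) (n k + k), fun k => ⟨n k, Set.subset_iUnion_of_subset k subset_rfl⟩,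
    fun i => ?_⟩
  obtain ⟨N, hN⟩ := eventually_atTop.1 (hg i)
  have hstart : ∀ k ≥ N, n k ∈ intervalStarts k (f i) := fun k hk => by
    by_contra h
    exact (hn k).not_ge ((le_csSup (hSf k i).bddAbove ⟨hnS k, h⟩).trans (hN k hk))
  refine ((Set.finite_lt_nat N).biUnion fun k _ => Set.finite_Icc (n k) (n k + k)).subset ?_
  rintro x ⟨hx, hxf⟩
  obtain ⟨k, hk⟩ := Set.mem_iUnion.1 hx
  refine Set.mem_biUnion (x := k) ?_ hk
  by_contra hkN
  exact hxf (hstart k (not_lt.1 hkN) hk)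

lemma aleph0_lt_cof_ord_continuum : ℵ₀ < continuum.ord.cof := by
  by_contra! h
  have := (lt_power_cof_ord aleph0_le_continuum).trans_le
    (power_le_power_left continuum_ne_zero h)
  rw [continuum_power_aleph0] at this
  exact this.false

lemma exists_gt_of_countable_continuum {s : Set continuum.ord.ToType} (hs : s.Countable) :
    ∃ b, ∀ i ∈ s, i < b := by
  by_contra! h
  have := (Order.cof_le h).trans (le_aleph0_iff_set_countable.2 hs)
  rw [Ordinal.cof_toType] at this
  exact aleph0_lt_cof_ord_continuum.not_ge this

instance : Nonempty continuum.ord.ToType :=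
  (exists_gt_of_countable_continuum Set.countable_empty).nonempty

instance : NoMaxOrder continuum.ord.ToType :=
  ⟨fun i => (exists_gt_of_countable_continuum (Set.countable_singleton i)).imp fun _ hb => hb i rfl⟩

structure IsThickTower {σ : Type*} [LinearOrder σ] (T : σ → Set ℕ) : Prop where
  thick : ∀ i, Thick (T i)
  almostSub_of_lt : ∀ ⦃i j⦄, j < i → almostSub (T i) (T j)
  almostSub_preimage_of_lt : ∀ ⦃i j⦄, j < i → almostSub (T i) ((· + 1) ⁻¹' T j)

def towerFilter {σ : Type*} (T : σ → Set ℕ) : Filter ℕ := cofinite ⊓ ⨅ i, 𝓟 (T i)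

lemma mem_filterStar_towerFilter {σ : Type*} {T : σ → Set ℕ} {p : βN} :
    p ∈ filterStar (towerFilter T) ↔ p ∈ NStar ∧ ∀ i, T i ∈ p := by
  simp [mem_filterStar, towerFilter, NStar]

lemma filterStar_nonempty (F : Filter ℕ) [F.NeBot] : (filterStar F).Nonempty :=
  ⟨Ultrafilter.of F, mem_filterStar.2 (Ultrafilter.of_le F)⟩

namespace IsThickTower

variable {σ : Type*} [LinearOrder σ] {T : σ → Set ℕ}

lemma almostSub_of_le (hT : IsThickTower T) {i j : σ} (hji : j ≤ i) : almostSub (T i) (T j) :=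
  hji.lt_or_eq.elim (hT.almostSub_of_lt ·) fun h => h ▸ almostSub_of_subset subset_rfl

lemma towerFilter_neBot [Nonempty σ] (hT : IsThickTower T) : (towerFilter T).NeBot := by
  have hle : ∀ ⦃i j⦄, j ≤ i → cofinite ⊓ 𝓟 (T i) ≤ cofinite ⊓ 𝓟 (T j) := fun i j hji =>
    le_inf inf_le_left (Filter.le_principal_iff.2
      (almostSub_iff_mem_cofinite_inf_principal.1 (hT.almostSub_of_le hji)))
  rw [towerFilter, inf_iInf]
  exact Filter.iInf_neBot_of_directed'
    (fun i j => ⟨max i j, hle (le_max_left i j), hle (le_max_right i j)⟩)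
    fun i => (hT.thick i).infinite.cofinite_inf_principal_neBot

lemma tendsto_add_towerFilter [NoMaxOrder σ] (hT : IsThickTower T) (n : ℕ) :
    Tendsto (· + n) (towerFilter T) (towerFilter T) := by
  have hone : Tendsto (· + 1) (towerFilter T) (towerFilter T) := by
    refine tendsto_inf.2 ⟨(tendsto_add_cofinite 1).mono_left inf_le_left,
      tendsto_iInf.2 fun j => tendsto_principal.2 ?_⟩
    obtain ⟨i, hji⟩ := exists_gt j
    exact (inf_le_inf_left _ (iInf_le _ i) : towerFilter T ≤ cofinite ⊓ 𝓟 (T i))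
      (almostSub_iff_mem_cofinite_inf_principal.1 (hT.almostSub_preimage_of_lt hji))
  induction n with
  | zero => exact tendsto_id
  | succ n ih => simpa [Function.comp_def, add_assoc] using hone.comp ih

lemma mem_filterStar_of_addU_mem (hT : IsThickTower T)
    (hcof : ∀ s : Set σ, s.Countable → ∃ b, ∀ i ∈ s, i < b) {q r : βN} (hq : q ∈ NStar)
    (hqq : addU q q = q) (hqr : addU q r ∈ filterStar (towerFilter T)) :
    q ∈ filterStar (towerFilter T) := by
  have : NoMaxOrder σ :=
    ⟨fun i => (hcof {i} (Set.countable_singleton i)).imp fun _ hb => hb i rfl⟩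
  obtain ⟨n, hn⟩ : ∃ n, addU q (pure n) ∈ filterStar (towerFilter T) := by
    by_contra! h
    simp only [mem_filterStar_towerFilter, addU_mem_NStar hq, true_and, not_forall] at h
    choose idx hidx using h
    obtain ⟨b, hb⟩ := hcof (Set.range idx) (Set.countable_range idx)
    obtain ⟨n, hn⟩ :=
      Ultrafilter.nonempty_of_mem (mem_addU.1 ((mem_filterStar_towerFilter.1 hqr).2 b))
    exact hidx n (mem_of_almostSub (addU_mem_NStar hq _) (show T b ∈ addU q (pure n) from hn)
      (hT.almostSub_of_lt (hb _ (Set.mem_range_self n))))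
  exact mem_filterStar_of_addU_pure_mem hT.tendsto_add_towerFilter hq hqq hn

end IsThickTower

lemma exists_addU_eq_of_decides {σ : Type*} {T : σ → Set ℕ} (hdec : ∀ A, ∃ i, Decides (T i) A)
    {p q : βN} (hp : p ∈ filterStar (towerFilter T)) (hq : q ∈ filterStar (towerFilter T)) :
    ∃ x, addU p x = q := by
  refine exists_addU_eq_of_forall_mem fun A hA => ?_
  obtain ⟨i, hdisj | ⟨k, hk⟩⟩ := hdec A
  · have := Filter.inter_mem ((mem_filterStar_towerFilter.1 hq).2 i) hA
    rw [hdisj.inter_eq] at this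
    exact absurd this q.empty_notMem
  · obtain ⟨n, -, hn⟩ := (Ultrafilter.finite_biUnion_mem_iff (Set.finite_Iic k)).1
      (Filter.mem_of_superset ((mem_filterStar_towerFilter.1 hp).2 i) hk)
    exact ⟨n, hn⟩

lemma addU_eq_right_of_decides {σ : Type*} {T : σ → Set ℕ} (hdec : ∀ A, ∃ i, Decides (T i) A)
    {p q : βN} (hp : p ∈ filterStar (towerFilter T)) (hpp : addU p p = p)
    (hq : q ∈ filterStar (towerFilter T)) : addU p q = q := by
  obtain ⟨x, rfl⟩ := exists_addU_eq_of_decides hdec hp hq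
  rw [← addU_assoc, hpp]

theorem exists_isThickTower_decides (h : towerNum = 𝔠) :
    ∃ T : continuum.{0}.ord.ToType → Set ℕ, IsThickTower T ∧ ∀ A, ∃ i, Decides (T i) A := by
  obtain ⟨E⟩ : Nonempty (continuum.{0}.ord.ToType ≃ Set ℕ) := Cardinal.eq.1 (by simp)
  obtain ⟨T, hT⟩ := exists_transfinite_seq (fun i Y => Thick Y ∧ Decides Y (E i))
    (fun Y Z => almostSub Y Z ∧ almostSub Y ((· + 1) ⁻¹' Z)) fun i T hT => by
      obtain ⟨B, hB, hBT⟩ := exists_thick_almostSub_of_mk_lt_towerNum (fun j : Set.Iio i => T j)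
        (show #(Set.Iio i) < towerNum by rw [h]; simpa using mk_Iio_lt i) (fun j => (hT j j.2).1.1)
        fun j k hkj => ((hT j j.2).2 k hkj).1
      obtain ⟨Y, hYB, hY, hYE⟩ := hB.inter_preimage_add_one.exists_subset_decides (E i)
      refine ⟨Y, ⟨hY, hYE⟩, fun j hj => ⟨?_, ?_⟩⟩
      · exact almostSub_trans (almostSub_of_subset (hYB.trans Set.inter_subset_left))
          (hBT ⟨j, hj⟩)
      · exact almostSub_trans (almostSub_of_subset (hYB.trans Set.inter_subset_right))
          ((hBT ⟨j, hj⟩).preimage_add 1)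
  refine ⟨T, ⟨fun i => (hT i).1.1, fun i j hji => ((hT i).2 j hji).1,
    fun i j hji => ((hT i).2 j hji).2⟩, fun A => ⟨E.symm A, by simpa using (hT (E.symm A)).1.2⟩⟩

/-- If `𝔱 = 𝔠` then there is an idempotent `p ∈ ℕ*` that is
`≤`-incomparable with every other idempotent of `ℕ*`, where `r ≤ s` means
`r + s = s + r = r`. -/
theorem stmt11 (h : towerNum = Cardinal.continuum) :
    ∃ p : βN, p ∈ NStar ∧ addU p p = p ∧
      ∀ q : βN, q ∈ NStar → addU q q = q → q ≠ p →
        ¬(addU p q = p ∧ addU q p = p) ∧ ¬(addU q p = q ∧ addU p q = q) := by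
  obtain ⟨T, hT, hdec⟩ := exists_isThickTower_decides h
  have hR := isRightIdeal_filterStar hT.tendsto_add_towerFilter
  have := hT.towerFilter_neBot
  obtain ⟨p, hp, hpp⟩ :=
    hR.exists_idempotent (isClosed_filterStar _) (filterStar_nonempty (towerFilter T))
  refine ⟨p, (mem_filterStar_towerFilter.1 hp).1, hpp, fun q hq hqq hne => ⟨?_, ?_⟩⟩
  · rintro ⟨hpq, hqp⟩
    have hqR := hT.mem_filterStar_of_addU_mem (fun s hs => exists_gt_of_countable_continuum hs)
      hq hqq (hqp ▸ hp)
    exact hne ((addU_eq_right_of_decides hdec hp hpp hqR).symm.trans hpq)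
  · rintro ⟨hqp, hpq⟩
    have hqR : q ∈ filterStar (towerFilter T) := hpq ▸ hR p hp q
    exact hne (hqp.symm.trans (addU_eq_right_of_decides hdec hqR hqq hp))

end
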